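/- (Closed formula, C_n) Let λ be a rigid C_n partition with length l; let l' = l if l is even and l' = l + 1 if l is odd, let M = l'/2, and let (α_1, …, α_M; β_1, …, β_M) be the symbol of λ in the C_n theory. Then for every 1 ≤ p ≤ M: α_{M+1−p} = #{ i : 1 ≤ i ≤ λ_1, and either (λ^T_i is odd, i is odd, and (λ^T_i + 1)/2 ≥ p) or (λ^T_i is even, i is even, and λ^T_i/2 ≥ p) }; and β_{M+1−p} = #{ i : 1 ≤ i ≤ λ_1, and either (λ^T_i is even, i is odd, and λ^T_i/2 ≥ p) or (λ^T_i is odd, i is even, and (λ^T_i − 1)/2 ≥ p) }. -/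

import Mathlib

/-!
The numbers `s_k` are the bead positions of an abacus. For `1 ≤ i ≤ λ_1` the positions
`t_i = l' - 1 + i - λ^T_i` are exactly the empty positions below `s_1`, and those below `s_k`
are the `t_i` with `i ≤ λ_k`. If `v` is the `p`-th largest bead of parity `r`, then `⌊v/2⌋`
counts the positions of parity `r` below `v`, of which `M - p` are beads; so the symbol entry
`⌊v/2⌋ - (M - p)` counts the gaps of parity `r` below `v`. The gap `t_i` lies below `v` iff at
least `p` of the beads `s_1 > … > s_{λ^T_i}` above it have parity `r`. Because `l'` is even and
odd parts occur an even number of times, exactly `⌈λ^T_i / 2⌉` of these beads are odd, and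
`t_i ≡ i + λ^T_i + 1 (mod 2)`; this gives the conditions of the formula.
-/

/-- `svals μ` lists the numbers `s_k = l - k + μ_k` (`1 ≤ k ≤ l`, `l` the
length of `μ`), computed with 0-based indices: entry `k` is `(l - 1 - k) + μ_k`.
For weakly decreasing `μ` this list is strictly decreasing. -/
def svals (μ : List ℕ) : List ℕ :=
  μ.mapIdx (fun k a => (μ.length - 1 - k) + a)

/-- The odd values `2f_1+1 < … < 2f_M+1` of `svals μ`, in increasing order. -/
def oddVals (μ : List ℕ) : List ℕ :=
  ((svals μ).filter (fun x => decide (x % 2 = 1))).reverse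

/-- The even values `2g_1 < … < 2g_{M'}` of `svals μ`, in increasing order. -/
def evenVals (μ : List ℕ) : List ℕ :=
  ((svals μ).filter (fun x => decide (x % 2 = 0))).reverse

/-- The top row of the symbol of `μ`: `α_i = f_i - i + 1` where
`2f_i + 1` is the `i`-th smallest odd value of `svals μ` (0-based entry `i`
is `α_{i+1} = f_{i+1} - i`). -/
def topRow (μ : List ℕ) : List ℕ :=
  (oddVals μ).mapIdx (fun i v => (v - 1) / 2 - i)

/-- The bottom row of the symbol of `μ`: `β_i = g_i - i + 1` where `2g_i` is
the `i`-th smallest even value of `svals μ`. -/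
def botRow (μ : List ℕ) : List ℕ :=
  (evenVals μ).mapIdx (fun i v => v / 2 - i)

/-- The row `λ^T_i` of the transposed Young diagram: the number of parts
of `lam` that are `≥ i`. -/
def transposeRow (lam : List ℕ) (i : ℕ) : ℕ :=
  lam.countP (fun a => decide (i ≤ a))

open Finset

namespace List

theorem lt_countP_iff_of_pairwise_ge {α : Type*} [Preorder α] {l : List α}
    (hl : l.Pairwise (· ≥ ·)) {p : α → Bool} (hp : Monotone p) {k : ℕ} (hk : k < l.length) :
    k < l.countP p ↔ p l[k] := by
  induction l generalizing k with
  | nil => simp at hk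
  | cons a l ih =>
    obtain ⟨ha, hl⟩ := pairwise_cons.mp hl
    by_cases hpa : p a
    · cases k with
      | zero => simp [hpa]
      | succ k => simp [hpa, ih hl (by simpa using hk)]
    · have hpl : ∀ b ∈ l, p b = false := fun b hb => by
        simpa [hpa] using Bool.le_iff_imp.mp (hp (ha b hb))
      have hzero : l.countP p = 0 := countP_eq_zero.mpr fun b hb => by simp [hpl b hb]
      cases k with
      | zero => simp [hpa, hzero]
      | succ k => simp [hpa, hzero, hpl _ (getElem_mem _)]

theorem countP_getElem_le_of_pairwise_gt {α : Type*} [Preorder α] [DecidableLE α] {l : List α}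
    (hl : l.Pairwise (· > ·)) {k : ℕ} (hk : k < l.length) :
    l.countP (fun b => decide (l[k] ≤ b)) = k + 1 := by
  have hmono : Monotone (fun b => decide (l[k] ≤ b)) := fun a b hab =>
    Bool.le_iff_imp.mpr fun h => by simpa using (of_decide_eq_true h).trans hab
  have hiff : ∀ j (hj : j < l.length), j < l.countP (fun b => decide (l[k] ≤ b)) ↔ j ≤ k := by
    intro j hj
    rw [lt_countP_iff_of_pairwise_ge (hl.imp le_of_lt) hmono hj, decide_eq_true_iff]
    constructor
    · intro h
      by_contra! hkj
      exact not_le_of_gt (pairwise_iff_getElem.mp hl k j hk hj hkj) h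
    · intro h
      rcases h.eq_or_lt with rfl | h
      · exact le_rfl
      · exact (pairwise_iff_getElem.mp hl j k hj hk h).le
  refine le_antisymm (not_lt.mp fun hlt => ?_) ((hiff k hk).mpr le_rfl)
  exact absurd ((hiff (k + 1) (hlt.trans_le countP_le_length)).mp hlt) (by omega)

theorem countP_lt_getElem_of_pairwise_gt {α : Type*} [LinearOrder α] {l : List α}
    (hl : l.Pairwise (· > ·)) {k : ℕ} (hk : k < l.length) :
    l.countP (fun b => decide (b < l[k])) = l.length - (k + 1) := by
  have hsplit := l.length_eq_countP_add_countP (fun b => decide (l[k] ≤ b))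
  rw [countP_getElem_le_of_pairwise_gt hl hk] at hsplit
  have : l.countP (fun b => decide ¬decide (l[k] ≤ b) = true) =
      l.countP (fun b => decide (b < l[k])) :=
    countP_congr fun _ _ => by simp
  omega

end List

theorem Nat.card_Ico_filter_mod_two {a b r : ℕ} (hab : a ≤ b) (hr : r ≤ 1) :
    #{k ∈ Ico a b | k % 2 = r} = (b + 1 - r) / 2 - (a + 1 - r) / 2 := by
  induction b, hab using Nat.le_induction with
  | base => simp
  | succ b hab ih =>
    rw [Nat.Ico_succ_right_eq_insert_Ico hab, filter_insert]
    split_ifs with hb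
    · rw [card_insert_of_notMem (by simp), ih]
      omega
    · rw [ih]
      omega

namespace PartitionSymbol

/-- `bead μ k` is `s_{k+1}`, the entry `k` of `svals μ`. -/
def bead (μ : List ℕ) (k : ℕ) : ℕ := μ.length - 1 - k + μ.getD k 0

/-- For `1 ≤ i ≤ μ_1` these are the positions below `bead μ 0` that carry no bead
(`range_bead_eq_union`). -/
def gap (μ : List ℕ) (i : ℕ) : ℕ := μ.length - 1 + i - transposeRow μ i

def parityBeads (μ : List ℕ) (r : ℕ) : List ℕ :=
  (svals μ).filter (fun x => decide (x % 2 = r))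

/-- For a value `v` of parity `r`, `v / 2` is `f` if `v = 2f + 1` and `g` if `v = 2g`. -/
def symbolRow (μ : List ℕ) (r : ℕ) : List ℕ :=
  (parityBeads μ r).reverse.mapIdx (fun j v => v / 2 - j)

variable {μ : List ℕ} {i k r : ℕ}

theorem svals_eq_map_bead (μ : List ℕ) : svals μ = (List.range μ.length).map (bead μ) := by
  refine List.ext_getElem (by simp [svals]) fun k h _ => ?_
  have hk : k < μ.length := by simpa [svals] using h
  simp [svals, bead, hk]

theorem countP_svals (μ : List ℕ) (p : ℕ → Bool) :
    (svals μ).countP p = #{k ∈ range μ.length | p (bead μ k)} := by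
  rw [svals_eq_map_bead, List.countP_map, card_def, filter_val, range_val, Multiset.range,
    Multiset.filter_coe, Multiset.coe_card, List.countP_eq_length_filter]
  simp [Function.comp_def]

theorem transposeRow_eq_add_count (μ : List ℕ) (i : ℕ) :
    transposeRow μ i = transposeRow μ (i + 1) + μ.count i := by
  induction μ with
  | nil => rfl
  | cons a μ ih =>
    simp only [transposeRow, List.countP_cons, List.count_cons] at ih ⊢
    split_ifs <;> simp_all <;> omega

theorem transposeRow_le_length (μ : List ℕ) (i : ℕ) : transposeRow μ i ≤ μ.length :=
  List.countP_le_length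

theorem transposeRow_zero (μ : List ℕ) : transposeRow μ 0 = μ.length :=
  List.countP_eq_length.mpr fun _ _ => by simp

theorem transposeRow_antitone (μ : List ℕ) : Antitone (transposeRow μ) := fun _ _ h =>
  List.countP_mono_left fun _ _ ha => by simpa using h.trans (of_decide_eq_true ha)

theorem gap_strictMonoOn (μ : List ℕ) : StrictMonoOn (gap μ) (Set.Ici 1) := by
  intro i hi j _ hij
  have := transposeRow_antitone μ hij.le
  have := transposeRow_le_length μ i
  simp only [Set.mem_Ici] at hi
  unfold gap
  omega

theorem getD_antitone (hμ : μ.Pairwise (· ≥ ·)) {j : ℕ} (hjk : j ≤ k) (hk : k < μ.length) :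
    μ.getD k 0 ≤ μ.getD j 0 := by
  rw [List.getD_eq_getElem _ _ hk, List.getD_eq_getElem _ _ (hjk.trans_lt hk)]
  rcases hjk.eq_or_lt with rfl | hjk
  · exact le_rfl
  · exact List.pairwise_iff_getElem.mp hμ j k _ hk hjk

theorem lt_transposeRow_iff (hμ : μ.Pairwise (· ≥ ·)) (hk : k < μ.length) (i : ℕ) :
    k < transposeRow μ i ↔ i ≤ μ.getD k 0 := by
  have hmono : Monotone (fun a => decide (i ≤ a)) := fun a b hab =>
    Bool.le_iff_imp.mpr fun h => by simpa using (of_decide_eq_true h).trans hab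
  rw [transposeRow, List.lt_countP_iff_of_pairwise_ge hμ hmono hk, List.getD_eq_getElem _ _ hk,
    decide_eq_true_iff]

theorem transposeRow_eq_zero (hμ : μ.Pairwise (· ≥ ·)) (h : μ.getD 0 0 < i) :
    transposeRow μ i = 0 := by
  by_contra hne
  have h0 : 0 < μ.length := (Nat.pos_of_ne_zero hne).trans_le (transposeRow_le_length μ i)
  have := (lt_transposeRow_iff hμ h0 i).mp (Nat.pos_of_ne_zero hne)
  omega

theorem bead_strictAntiOn (hμ : μ.Pairwise (· ≥ ·)) : StrictAntiOn (bead μ) (Set.Iio μ.length) := by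
  intro j _ k hk hjk
  have := getD_antitone hμ hjk.le hk
  simp only [Set.mem_Iio] at hk
  unfold bead
  omega

theorem gap_lt_bead (hμ : μ.Pairwise (· ≥ ·)) (hi : 1 ≤ i) (h : k < transposeRow μ i) :
    gap μ i < bead μ k := by
  have hk := h.trans_le (transposeRow_le_length μ i)
  have := (lt_transposeRow_iff hμ hk i).mp h
  unfold gap bead
  omega

theorem bead_lt_gap (hμ : μ.Pairwise (· ≥ ·)) (hk : k < μ.length) (h : transposeRow μ i ≤ k) :
    bead μ k < gap μ i := by
  have := (lt_transposeRow_iff hμ hk i).not.mp (by omega)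
  unfold gap bead
  omega

theorem gap_lt_bead_iff (hμ : μ.Pairwise (· ≥ ·)) (hi : 1 ≤ i) (hk : k < μ.length) :
    gap μ i < bead μ k ↔ k < transposeRow μ i :=
  ⟨fun h => by_contra fun h' => (bead_lt_gap hμ hk (not_lt.mp h')).not_gt h, gap_lt_bead hμ hi⟩

theorem disjoint_image_bead_image_gap (hμ : μ.Pairwise (· ≥ ·)) (k n : ℕ) :
    Disjoint ((Ioo k μ.length).image (bead μ)) ((Icc 1 n).image (gap μ)) := by
  simp only [disjoint_left, mem_image, mem_Ioo, mem_Icc, not_exists, not_and]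
  rintro _ ⟨j, ⟨-, hj⟩, rfl⟩ i ⟨hi, -⟩ heq
  rcases lt_or_ge j (transposeRow μ i) with h | h
  · exact (gap_lt_bead hμ hi h).ne heq
  · exact (bead_lt_gap hμ hj h).ne' heq

theorem bead_injOn_Ioo (hμ : μ.Pairwise (· ≥ ·)) (k : ℕ) :
    Set.InjOn (bead μ) (Ioo k μ.length) :=
  (bead_strictAntiOn hμ).injOn.mono fun _ hj => (mem_Ioo.mp hj).2

theorem gap_injOn_Icc (μ : List ℕ) (n : ℕ) : Set.InjOn (gap μ) (Icc 1 n) :=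
  (gap_strictMonoOn μ).injOn.mono fun _ hi => (mem_Icc.mp hi).1

theorem range_bead_eq_union (hμ : μ.Pairwise (· ≥ ·)) (hk : k < μ.length) :
    range (bead μ k) = (Ioo k μ.length).image (bead μ) ∪ (Icc 1 (μ.getD k 0)).image (gap μ) := by
  have hbeads : (Ioo k μ.length).image (bead μ) ⊆ range (bead μ k) := by
    simp only [subset_iff, mem_image, mem_Ioo, mem_range]
    rintro _ ⟨j, ⟨hkj, hj⟩, rfl⟩
    exact bead_strictAntiOn hμ hk hj hkj
  have hgaps : (Icc 1 (μ.getD k 0)).image (gap μ) ⊆ range (bead μ k) := by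
    simp only [subset_iff, mem_image, mem_Icc, mem_range]
    rintro _ ⟨i, ⟨hi, hik⟩, rfl⟩
    exact gap_lt_bead hμ hi ((lt_transposeRow_iff hμ hk i).mpr hik)
  refine (eq_of_subset_of_card_le (union_subset hbeads hgaps) ?_).symm
  rw [card_union_of_disjoint (disjoint_image_bead_image_gap hμ k _),
    card_image_of_injOn (bead_injOn_Ioo hμ k), card_image_of_injOn (gap_injOn_Icc μ _)]
  simp only [Nat.card_Ioo, Nat.card_Icc, card_range, bead]
  omega

theorem card_filter_range_bead (hμ : μ.Pairwise (· ≥ ·)) (hk : k < μ.length)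
    (P : ℕ → Prop) [DecidablePred P] :
    #{x ∈ range (bead μ k) | P x} =
      #{j ∈ Ioo k μ.length | P (bead μ j)} + #{i ∈ Icc 1 (μ.getD k 0) | P (gap μ i)} := by
  rw [range_bead_eq_union hμ hk, filter_union,
    card_union_of_disjoint (disjoint_filter_filter (disjoint_image_bead_image_gap hμ k _)),
    filter_image, filter_image,
    card_image_of_injOn ((bead_injOn_Ioo hμ k).mono (filter_subset _ _)),
    card_image_of_injOn ((gap_injOn_Icc μ _).mono (filter_subset _ _))]

theorem card_Ico_filter_bead_mod_two (hμ : μ.Pairwise (· ≥ ·)) (hl : Even μ.length)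
    (hCn : ∀ m : ℕ, Odd m → Even (μ.count m)) (i : ℕ) (hr : r ≤ 1) :
    #{k ∈ Ico (transposeRow μ (i + 1)) (transposeRow μ i) | bead μ k % 2 = r} =
      (transposeRow μ i + r) / 2 - (transposeRow μ (i + 1) + r) / 2 := by
  have hAB := transposeRow_antitone μ (Nat.le_add_right i 1)
  have hB := transposeRow_le_length μ i
  -- the parts in this block all equal `i`, so the beads alternate in parity; for odd `i` the
  -- block has even length `μ.count i`
  have hblock : ∀ k ∈ Ico (transposeRow μ (i + 1)) (transposeRow μ i),
      bead μ k % 2 = r ↔ k % 2 = (i + 1 + r) % 2 := by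
    intro k hk
    obtain ⟨hk₁, hk₂⟩ := mem_Ico.mp hk
    have hkl := hk₂.trans_le hB
    have := (lt_transposeRow_iff hμ hkl i).mp hk₂
    have := (lt_transposeRow_iff hμ hkl (i + 1)).not.mp (not_lt.mpr hk₁)
    rw [Nat.even_iff] at hl
    unfold bead
    omega
  rw [filter_congr hblock, Nat.card_Ico_filter_mod_two hAB (by omega)]
  have hcount := transposeRow_eq_add_count μ i
  have hodd : i % 2 = 1 → μ.count i % 2 = 0 := fun h =>
    Nat.even_iff.mp (hCn i (Nat.odd_iff.mpr h))
  omega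

theorem card_filter_bead_mod_two (hμ : μ.Pairwise (· ≥ ·)) (hl : Even μ.length)
    (hCn : ∀ m : ℕ, Odd m → Even (μ.count m)) (i : ℕ) (hr : r ≤ 1) :
    #{k ∈ range (transposeRow μ i) | bead μ k % 2 = r} = (transposeRow μ i + r) / 2 := by
  -- downward induction on `i`, starting above the largest part
  obtain ⟨d, hd⟩ : ∃ d, μ.getD 0 0 < i + d := ⟨μ.getD 0 0 + 1, by omega⟩
  induction d generalizing i with
  | zero =>
    rw [transposeRow_eq_zero hμ (by simpa using hd)]
    simp only [range_zero, filter_empty, card_empty]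
    omega
  | succ d ih =>
    have hAB := transposeRow_antitone μ (Nat.le_add_right i 1)
    rw [card_filter, ← sum_range_add_sum_Ico _ hAB, ← card_filter, ← card_filter,
      ih (i + 1) (by omega), card_Ico_filter_bead_mod_two hμ hl hCn i hr]
    have : (transposeRow μ (i + 1) + r) / 2 ≤ (transposeRow μ i + r) / 2 := by omega
    omega

theorem countP_parityBeads (μ : List ℕ) (r : ℕ) (q : ℕ → Bool) :
    (parityBeads μ r).countP q = #{k ∈ range μ.length | bead μ k % 2 = r ∧ q (bead μ k)} := by
  rw [parityBeads, List.countP_filter, countP_svals]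
  simp [and_comm]

theorem length_parityBeads (hμ : μ.Pairwise (· ≥ ·)) (hl : Even μ.length)
    (hCn : ∀ m : ℕ, Odd m → Even (μ.count m)) (hr : r ≤ 1) :
    (parityBeads μ r).length = μ.length / 2 := by
  have := card_filter_bead_mod_two hμ hl hCn 0 hr
  rw [transposeRow_zero] at this
  nth_rw 1 [← List.countP_true]
  rw [countP_parityBeads]
  simp only [and_true, this]
  rw [Nat.even_iff] at hl
  omega

theorem parityBeads_pairwise_gt (hμ : μ.Pairwise (· ≥ ·)) (r : ℕ) :
    (parityBeads μ r).Pairwise (· > ·) := by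
  refine List.Pairwise.filter _ ?_
  rw [svals_eq_map_bead, List.pairwise_map]
  exact List.pairwise_lt_range.imp_of_mem fun hj hk hjk =>
    bead_strictAntiOn hμ (List.mem_range.mp hj) (List.mem_range.mp hk) hjk

theorem gap_lt_getElem_parityBeads_iff (hμ : μ.Pairwise (· ≥ ·)) (hl : Even μ.length)
    (hCn : ∀ m : ℕ, Odd m → Even (μ.count m)) (hi : 1 ≤ i) (hr : r ≤ 1) {j : ℕ}
    (hj : j < (parityBeads μ r).length) :
    gap μ i < (parityBeads μ r)[j] ↔ j < (transposeRow μ i + r) / 2 := by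
  have hmono : Monotone (fun x => decide (gap μ i < x)) := fun a b hab =>
    Bool.le_iff_imp.mpr fun h => by simpa using (of_decide_eq_true h).trans_le hab
  have hbeads : #{k ∈ range μ.length | bead μ k % 2 = r ∧ decide (gap μ i < bead μ k)} =
      #{k ∈ range (transposeRow μ i) | bead μ k % 2 = r} := by
    congr 1
    ext k
    simp only [mem_filter, mem_range, decide_eq_true_eq]
    constructor
    · rintro ⟨hk, hr, hgap⟩
      exact ⟨(gap_lt_bead_iff hμ hi hk).mp hgap, hr⟩
    · rintro ⟨hk, hr⟩
      exact ⟨hk.trans_le (transposeRow_le_length μ i), hr, gap_lt_bead hμ hi hk⟩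
  have hcount := List.lt_countP_iff_of_pairwise_ge
    ((parityBeads_pairwise_gt hμ r).imp le_of_lt) hmono hj
  rw [decide_eq_true_iff, countP_parityBeads, hbeads, card_filter_bead_mod_two hμ hl hCn i hr]
    at hcount
  exact hcount.symm

theorem card_Ioo_filter_bead_mod_two (hμ : μ.Pairwise (· ≥ ·)) (hk : k < μ.length) (r : ℕ) :
    #{j ∈ Ioo k μ.length | bead μ j % 2 = r} =
      (parityBeads μ r).countP (fun x => decide (x < bead μ k)) := by
  rw [countP_parityBeads]
  congr 1
  ext j
  simp only [mem_filter, mem_Ioo, mem_range, decide_eq_true_eq]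
  constructor
  · rintro ⟨⟨hkj, hj⟩, hr⟩
    exact ⟨hj, hr, bead_strictAntiOn hμ hk hj hkj⟩
  · rintro ⟨hj, hr, hlt⟩
    exact ⟨⟨((bead_strictAntiOn hμ).lt_iff_gt hj hk).mp hlt, hj⟩, hr⟩

theorem symbolRow_getD (hμ : μ.Pairwise (· ≥ ·)) {M : ℕ} (hl : μ.length = 2 * M)
    (hCn : ∀ m : ℕ, Odd m → Even (μ.count m)) (hr : r ≤ 1) {p : ℕ} (hp : 1 ≤ p) (hpM : p ≤ M) :
    (symbolRow μ r).getD (M - p) 0 =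
      #{i ∈ Icc 1 (μ.getD 0 0) | gap μ i % 2 = r ∧ p ≤ (transposeRow μ i + r) / 2} := by
  have hev : Even μ.length := ⟨M, by omega⟩
  have hlen : (parityBeads μ r).length = M := by
    rw [length_parityBeads hμ hev hCn hr]
    omega
  have hj : p - 1 < (parityBeads μ r).length := by omega
  set v := (parityBeads μ r)[p - 1] with hv
  have hentry : (symbolRow μ r).getD (M - p) 0 = v / 2 - (M - p) := by
    rw [List.getD_eq_getElem _ _ (by simp [symbolRow, hlen]; omega)]
    simp only [symbolRow, List.getElem_mapIdx, List.getElem_reverse, hv]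
    congr 3
    omega
  obtain ⟨k, hk, hkv⟩ : ∃ k < μ.length, bead μ k = v := by
    have hmem : v ∈ svals μ := (List.mem_filter.mp (List.getElem_mem hj)).1
    simpa [svals_eq_map_bead] using hmem
  have hvr : v % 2 = r := by simpa using (List.mem_filter.mp (List.getElem_mem hj)).2
  have hbelow : #{j ∈ Ioo k μ.length | bead μ j % 2 = r} = M - p := by
    rw [card_Ioo_filter_bead_mod_two hμ hk, hkv, hv,
      List.countP_lt_getElem_of_pairwise_gt (parityBeads_pairwise_gt hμ r) hj, hlen]
    omega
  have hgap_lt : ∀ i, 1 ≤ i → (i ≤ μ.getD k 0 ↔ p ≤ (transposeRow μ i + r) / 2) := by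
    intro i hi
    rw [← lt_transposeRow_iff hμ hk, ← gap_lt_bead_iff hμ hi hk, hkv, hv,
      gap_lt_getElem_parityBeads_iff hμ hev hCn hi hr hj]
    omega
  have hgaps : {i ∈ Icc 1 (μ.getD k 0) | gap μ i % 2 = r} =
      {i ∈ Icc 1 (μ.getD 0 0) | gap μ i % 2 = r ∧ p ≤ (transposeRow μ i + r) / 2} := by
    ext i
    simp only [mem_filter, mem_Icc]
    constructor
    · rintro ⟨⟨hi, hik⟩, hgr⟩
      exact ⟨⟨hi, hik.trans (getD_antitone hμ (Nat.zero_le k) hk)⟩, hgr, (hgap_lt i hi).mp hik⟩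
    · rintro ⟨⟨hi, -⟩, hgr, hpi⟩
      exact ⟨⟨hi, (hgap_lt i hi).mpr hpi⟩, hgr⟩
  have hhalf : #{x ∈ range v | x % 2 = r} = v / 2 := by
    rw [range_eq_Ico, Nat.card_Ico_filter_mod_two (Nat.zero_le v) hr]
    omega
  rw [hentry, ← hgaps, ← hhalf, ← hkv, card_filter_range_bead hμ hk, hbelow,
    Nat.add_sub_cancel_left]

theorem topRow_eq_symbolRow (μ : List ℕ) : topRow μ = symbolRow μ 1 := by
  refine List.ext_getElem (by simp [topRow, symbolRow, oddVals, parityBeads]) fun j h _ => ?_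
  have hj : j < (oddVals μ).length := by simpa [topRow] using h
  have hodd : (oddVals μ)[j] % 2 = 1 := by
    have := List.getElem_mem hj
    unfold oddVals at this ⊢
    simp_all
  simp only [topRow, symbolRow, List.getElem_mapIdx]
  change _ = (oddVals μ)[j] / 2 - j
  omega

theorem botRow_eq_symbolRow (μ : List ℕ) : botRow μ = symbolRow μ 0 := rfl

theorem ite_pad_eq_append_replicate (μ : List ℕ) :
    (if μ.length % 2 = 1 then μ ++ [0] else μ) = μ ++ List.replicate (μ.length % 2) 0 := by
  split_ifs with h
  · simp [h]
  · simp [Nat.mod_two_ne_one.mp h]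

theorem pairwise_ge_append_replicate_zero (hμ : μ.Pairwise (· ≥ ·)) (z : ℕ) :
    (μ ++ List.replicate z 0).Pairwise (· ≥ ·) :=
  List.pairwise_append.mpr ⟨hμ, List.pairwise_replicate.mpr (Or.inr le_rfl),
    fun _ _ _ hb => by simp [List.eq_of_mem_replicate hb]⟩

theorem count_append_replicate_zero {m : ℕ} (hm : m ≠ 0) (z : ℕ) :
    (μ ++ List.replicate z 0).count m = μ.count m := by
  simp [List.count_replicate, Ne.symm hm]

theorem transposeRow_append_replicate_zero (hi : 1 ≤ i) (z : ℕ) :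
    transposeRow (μ ++ List.replicate z 0) i = transposeRow μ i := by
  simp [transposeRow, List.countP_replicate]
  omega

theorem getD_append_replicate_zero (z k : ℕ) :
    (μ ++ List.replicate z 0).getD k 0 = μ.getD k 0 := by
  rw [List.getD_eq_getElem?_getD, List.getElem?_append]
  split_ifs with h
  · rfl
  · simp [List.getElem?_eq_none (not_lt.mp h)]

end PartitionSymbol

open PartitionSymbol

theorem closed_formula_Cn_general (lam : List ℕ) (M : ℕ)
    (hsort : lam.Pairwise (· ≥ ·))
    (hCn : ∀ m : ℕ, Odd m → Even (lam.count m)) :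
    ∀ lam' : List ℕ, lam' = (if lam.length % 2 = 1 then lam ++ [0] else lam) →
    M = lam'.length / 2 →
    (∀ p : ℕ, 1 ≤ p → p ≤ M →
      (topRow lam').getD (M - p) 0 =
        ((Finset.Icc 1 (lam.getD 0 0)).filter (fun i =>
          ((transposeRow lam i) % 2 = 1 ∧ i % 2 = 1 ∧
            p ≤ ((transposeRow lam i) + 1) / 2) ∨
          ((transposeRow lam i) % 2 = 0 ∧ i % 2 = 0 ∧
            p ≤ (transposeRow lam i) / 2))).card ∧
      (botRow lam').getD (M - p) 0 =
        ((Finset.Icc 1 (lam.getD 0 0)).filter (fun i =>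
          ((transposeRow lam i) % 2 = 0 ∧ i % 2 = 1 ∧
            p ≤ (transposeRow lam i) / 2) ∨
          ((transposeRow lam i) % 2 = 1 ∧ i % 2 = 0 ∧
            p ≤ ((transposeRow lam i) - 1) / 2))).card) := by
  rintro _ rfl hM p hp hpM
  rw [ite_pad_eq_append_replicate] at hM ⊢
  have hsort' := pairwise_ge_append_replicate_zero hsort (lam.length % 2)
  have hlen : (lam ++ List.replicate (lam.length % 2) 0).length = 2 * M := by
    simp only [List.length_append, List.length_replicate] at hM ⊢
    omega
  have hCn' : ∀ m : ℕ, Odd m → Even ((lam ++ List.replicate (lam.length % 2) 0).count m) :=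
    fun m hm => by rw [count_append_replicate_zero hm.pos.ne']; exact hCn m hm
  rw [topRow_eq_symbolRow, botRow_eq_symbolRow, symbolRow_getD hsort' hlen hCn' le_rfl hp hpM,
    symbolRow_getD hsort' hlen hCn' zero_le_one hp hpM, getD_append_replicate_zero]
  constructor <;> refine congrArg card (filter_congr fun i hi => ?_) <;>
  · have hi : 1 ≤ i := (mem_Icc.mp hi).1
    have := transposeRow_le_length (lam ++ List.replicate (lam.length % 2) 0) i
    rw [gap, hlen, transposeRow_append_replicate_zero hi] at *
    omega

/-- **Closed formula for the symbol, `C_n` theory.**  For a rigid `C_n`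
partition `lam` of `2n` with length `l`, padded length `l'` (one extra `0`
appended when `l` is odd) and `M = l'/2`, the symbol
`(α_1, …, α_M; β_1, …, β_M)` of `lam` in the `C_n` theory satisfies, for
`1 ≤ p ≤ M`: `α_{M+1-p}` equals the number of `1 ≤ i ≤ λ_1` for which either
(`λ^T_i` odd, `i` odd, `(λ^T_i+1)/2 ≥ p`) or (`λ^T_i` even, `i` even,
`λ^T_i/2 ≥ p`); and `β_{M+1-p}` equals the number of `1 ≤ i ≤ λ_1` for which
either (`λ^T_i` even, `i` odd, `λ^T_i/2 ≥ p`) or (`λ^T_i` odd, `i` even,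
`(λ^T_i-1)/2 ≥ p`). -/
theorem closed_formula_Cn (n : ℕ) (hn : 0 < n) (lam : List ℕ) (M : ℕ)
    (hsort : lam.Pairwise (· ≥ ·))
    (hpos : ∀ x ∈ lam, 0 < x)
    (hsum : lam.sum = 2 * n)
    (hCn : ∀ m : ℕ, Odd m → Even (lam.count m))
    (hgap : ∀ i : ℕ, i + 1 < lam.length → lam.getD i 0 ≤ lam.getD (i + 1) 0 + 1)
    (hrig : ∀ m : ℕ, Even m → lam.count m ≠ 2) :
    ∀ lam' : List ℕ, lam' = (if lam.length % 2 = 1 then lam ++ [0] else lam) →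
    M = lam'.length / 2 →
    (∀ p : ℕ, 1 ≤ p → p ≤ M →
      (topRow lam').getD (M - p) 0 =
        ((Finset.Icc 1 (lam.getD 0 0)).filter (fun i =>
          ((transposeRow lam i) % 2 = 1 ∧ i % 2 = 1 ∧
            p ≤ ((transposeRow lam i) + 1) / 2) ∨
          ((transposeRow lam i) % 2 = 0 ∧ i % 2 = 0 ∧
            p ≤ (transposeRow lam i) / 2))).card ∧
      (botRow lam').getD (M - p) 0 =
        ((Finset.Icc 1 (lam.getD 0 0)).filter (fun i =>
          ((transposeRow lam i) % 2 = 0 ∧ i % 2 = 1 ∧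
            p ≤ (transposeRow lam i) / 2) ∨
          ((transposeRow lam i) % 2 = 1 ∧ i % 2 = 0 ∧
            p ≤ ((transposeRow lam i) - 1) / 2))).card) :=
  closed_formula_Cn_general lam M hsort hCn
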